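/- Let g ∈ ℋ^∞(B_{ℓ₂},ℓ₂) with ‖g‖ ≤ 1 be such that g admits a continuous extension g̃ : B̄_{ℓ₂} → ℓ₂ and g̃(S_{ℓ₂}) ⊆ S_{ℓ₂}. Then the fiber 𝓕(g) consists exactly of the composition homomorphism C_g; that is, every Φ ∈ ℳ_{u,∞}(B_{ℓ₂},B_{ℓ₂}) with ξ(Φ) = g satisfies Φ(f) = C_g(f) for every f ∈ 𝒜_u(B_{ℓ₂}). -/

import Mathlib

open Metric Set Filter

noncomputable section

/-- `ℓ2` is the complex Hilbert space of square-summable sequences indexed by `ℕ`. -/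
abbrev ℓ2 : Type := lp (fun _ : ℕ => ℂ) 2

/-- The open unit ball of `ℓ2`. -/
def oB : Set ℓ2 := Metric.ball 0 1

/-- The closed unit ball of `ℓ2`. -/
def cB : Set ℓ2 := Metric.closedBall 0 1

/-- The unit sphere of `ℓ2`. -/
def sph : Set ℓ2 := Metric.sphere 0 1

/-- The coordinate functional `x ↦ ⟨x, eₙ⟩ = xₙ` (inner product linear in the first variable). -/
def coord (n : ℕ) : ℓ2 → ℂ := fun x => x n

/-- Supremum norm on the open unit ball, for scalar-valued functions. -/
def supNorm (f : ℓ2 → ℂ) : ℝ := ⨆ x : oB, ‖f (x : ℓ2)‖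

/-- Supremum norm on the open unit ball, for `ℓ2`-valued functions. -/
def supNormV (g : ℓ2 → ℓ2) : ℝ := ⨆ x : oB, ‖g (x : ℓ2)‖

/-- Membership in `𝒜ᵤ(B)`: holomorphic on the open unit ball and uniformly continuous there. -/
def MemAu (f : ℓ2 → ℂ) : Prop :=
  DifferentiableOn ℂ f oB ∧ UniformContinuousOn f oB

/-- Membership in `ℋ^∞(B)`: holomorphic and bounded on the open unit ball. -/
def MemHinf (f : ℓ2 → ℂ) : Prop :=
  DifferentiableOn ℂ f oB ∧ ∃ C, ∀ x ∈ oB, ‖f x‖ ≤ C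

/-- Membership in `ℋ^∞(B,ℓ2)`: holomorphic and bounded on the open unit ball, `ℓ2`-valued. -/
def MemHinfV (g : ℓ2 → ℓ2) : Prop :=
  DifferentiableOn ℂ g oB ∧ ∃ C, ∀ x ∈ oB, ‖g x‖ ≤ C

/-- `fext` is (a representative of) the unique continuous extension `f̃` of `f` to the
closed unit ball. -/
def IsExt (f fext : ℓ2 → ℂ) : Prop :=
  ContinuousOn fext cB ∧ Set.EqOn fext f oB

/-- An element of the scalar-valued spectrum `ℳᵤ(B)`: a nonzero continuous `ℂ`-algebra
homomorphism `𝒜ᵤ(B) → ℂ`, encoded as a map on representatives. -/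
structure MuHom where
  toFun : (ℓ2 → ℂ) → ℂ
  map_add : ∀ f g, MemAu f → MemAu g → toFun (f + g) = toFun f + toFun g
  map_mul : ∀ f g, MemAu f → MemAu g → toFun (f * g) = toFun f * toFun g
  map_smul : ∀ (c : ℂ) (f), MemAu f → toFun (c • f) = c * toFun f
  respects : ∀ f g, MemAu f → MemAu g → Set.EqOn f g oB → toFun f = toFun g
  nonzero : ∃ f, MemAu f ∧ toFun f ≠ 0
  cont : ∃ C, ∀ f, MemAu f → ‖toFun f‖ ≤ C * supNorm f

/-- An element of the vector-valued spectrum `ℳ_{u,∞}(B,B)`: a nonzero continuous `ℂ`-algebra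
homomorphism `𝒜ᵤ(B) → ℋ^∞(B)`, encoded as a map on representatives. -/
structure MuInfHom where
  toFun : (ℓ2 → ℂ) → (ℓ2 → ℂ)
  maps_mem : ∀ f, MemAu f → MemHinf (toFun f)
  map_add : ∀ f g, MemAu f → MemAu g → ∀ x ∈ oB, toFun (f + g) x = toFun f x + toFun g x
  map_mul : ∀ f g, MemAu f → MemAu g → ∀ x ∈ oB, toFun (f * g) x = toFun f x * toFun g x
  map_smul : ∀ (c : ℂ) (f), MemAu f → ∀ x ∈ oB, toFun (c • f) x = c * toFun f x
  respects : ∀ f g, MemAu f → MemAu g → Set.EqOn f g oB → Set.EqOn (toFun f) (toFun g) oB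
  nonzero : ∃ f, MemAu f ∧ ∃ x ∈ oB, toFun f x ≠ 0
  cont : ∃ C, ∀ f, MemAu f → ∀ x ∈ oB, ‖toFun f x‖ ≤ C * supNorm f

/-- An element of the scalar-valued spectrum `ℳ_∞(B)`: a nonzero continuous `ℂ`-algebra
homomorphism `ℋ^∞(B) → ℂ`, encoded as a map on representatives. -/
structure MInfHom where
  toFun : (ℓ2 → ℂ) → ℂ
  map_add : ∀ f g, MemHinf f → MemHinf g → toFun (f + g) = toFun f + toFun g
  map_mul : ∀ f g, MemHinf f → MemHinf g → toFun (f * g) = toFun f * toFun g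
  map_smul : ∀ (c : ℂ) (f), MemHinf f → toFun (c • f) = c * toFun f
  respects : ∀ f g, MemHinf f → MemHinf g → Set.EqOn f g oB → toFun f = toFun g
  nonzero : ∃ f, MemHinf f ∧ toFun f ≠ 0
  cont : ∃ C, ∀ f, MemHinf f → ‖toFun f‖ ≤ C * supNorm f

/-- `ξ(Φ) = g`: the projection of `Φ` is the function `g`, i.e. `Φ(⟨·,eₙ⟩)(x) = g(x)ₙ`. -/
def xiEq (Φ : MuInfHom) (g : ℓ2 → ℓ2) : Prop :=
  ∀ x ∈ oB, ∀ n : ℕ, Φ.toFun (coord n) x = g x n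

/-- `Φ = C_g`: `Φ` is the composition homomorphism `f ↦ f̃ ∘ g`. -/
def IsCompHom (Φ : MuInfHom) (g : ℓ2 → ℓ2) : Prop :=
  ∀ f fext, MemAu f → IsExt f fext → ∀ x ∈ oB, Φ.toFun f x = fext (g x)

/-- The open unit ball of `ℋ^∞(B,ℓ2)`. -/
def ballHV : Set (ℓ2 → ℓ2) := {h | MemHinfV h ∧ supNormV h < 1}

/-- The open unit ball of `ℋ^∞(B)`. -/
def ballH : Set (ℓ2 → ℂ) := {h | MemHinf h ∧ supNorm h < 1}

/-- `F` is holomorphic on the open unit ball of `ℋ^∞(B,ℓ2)`: it is locally bounded there and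
`ℂ`-differentiable along every complex line (which, for maps on a ball of a Banach space, is
equivalent to Fréchet holomorphy). -/
def HolomorphicOnBallHV (F : (ℓ2 → ℓ2) → ℂ) : Prop :=
  (∀ h ∈ ballHV, ∃ ε > 0, ∃ C, ∀ k ∈ ballHV, supNormV (k - h) < ε → ‖F k‖ ≤ C) ∧
  (∀ h ∈ ballHV, ∀ k, MemHinfV k →
    DifferentiableOn ℂ (fun z : ℂ => F (h + z • k)) {z : ℂ | (h + z • k) ∈ ballHV})

/-- `F` is holomorphic on the open unit ball of `ℋ^∞(B)`: it is locally bounded there and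
`ℂ`-differentiable along every complex line. -/
def HolomorphicOnBallH (F : (ℓ2 → ℂ) → ℂ) : Prop :=
  (∀ h ∈ ballH, ∃ ε > 0, ∃ C, ∀ k ∈ ballH, supNorm (k - h) < ε → ‖F k‖ ≤ C) ∧
  (∀ h ∈ ballH, ∀ k, MemHinf k →
    DifferentiableOn ℂ (fun z : ℂ => F (h + z • k)) {z : ℂ | (h + z • k) ∈ ballH})

/-- `h ∈ 𝒞ℓ(f,g)` (with `fext = f̃` the continuous extension of `f` to the closed ball):
there is a net `(g_α)` in the open unit ball of `ℋ^∞(B,ℓ2)` converging weak-star to `g`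
(pointwise weak convergence of values) with `f̃(g_α(y)) → h(y)` for every `y ∈ B`. -/
def InCluster (fext : ℓ2 → ℂ) (g : ℓ2 → ℓ2) (h : ℓ2 → ℂ) : Prop :=
  ∃ (ι : Type) (l : Filter ι), l.NeBot ∧ ∃ gA : ι → ℓ2 → ℓ2,
    (∀ i, gA i ∈ ballHV) ∧
    (∀ y ∈ oB, ∀ u : ℓ2,
      Filter.Tendsto (fun i => (inner ℂ (gA i y) u : ℂ)) l (nhds (inner ℂ (g y) u))) ∧
    (∀ y ∈ oB, Filter.Tendsto (fun i => fext (gA i y)) l (nhds (h y)))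

section Basics

local notation "⟪" x ", " y "⟫" => @inner ℂ _ _ x y

lemma mem_oB_iff {x : ℓ2} : x ∈ oB ↔ ‖x‖ < 1 := by simp [oB, mem_ball_zero_iff]
lemma mem_cB_iff {x : ℓ2} : x ∈ cB ↔ ‖x‖ ≤ 1 := by simp [cB, mem_closedBall_zero_iff]
lemma mem_sph_iff {x : ℓ2} : x ∈ sph ↔ ‖x‖ = 1 := by simp [sph, mem_sphere_zero_iff_norm]
lemma oB_subset_cB : oB ⊆ cB := Metric.ball_subset_closedBall
lemma zero_mem_oB : (0:ℓ2) ∈ oB := by simp [mem_oB_iff]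

instance : Nonempty oB := ⟨⟨0, zero_mem_oB⟩⟩

lemma supNorm_nonneg (f : ℓ2 → ℂ) : 0 ≤ supNorm f :=
  Real.iSup_nonneg (fun _ => norm_nonneg _)

lemma supNorm_le {f : ℓ2 → ℂ} {M : ℝ} (h : ∀ x ∈ oB, ‖f x‖ ≤ M) : supNorm f ≤ M :=
  ciSup_le (fun x => h x x.2)

lemma le_supNorm {f : ℓ2 → ℂ} {M : ℝ} (hb : ∀ x ∈ oB, ‖f x‖ ≤ M) {x : ℓ2} (hx : x ∈ oB) :
    ‖f x‖ ≤ supNorm f := by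
  refine le_ciSup (f := fun x : oB => ‖f (x:ℓ2)‖) ⟨M, ?_⟩ ⟨x, hx⟩
  rintro r ⟨y, rfl⟩; exact hb y y.2

lemma le_supNormV {g : ℓ2 → ℓ2} {M : ℝ} (hb : ∀ x ∈ oB, ‖g x‖ ≤ M) {x : ℓ2} (hx : x ∈ oB) :
    ‖g x‖ ≤ supNormV g := by
  refine le_ciSup (f := fun x : oB => ‖g (x:ℓ2)‖) ⟨M, ?_⟩ ⟨x, hx⟩
  rintro r ⟨y, rfl⟩; exact hb y y.2

end Basics

section MemAuLemmas

local notation "⟪" x ", " y "⟫" => @inner ℂ _ _ x y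

/-- A uniformly continuous function on the open ball is bounded (stepping along segments). -/
lemma bounded_of_uc {f : ℓ2 → ℂ} (hf : UniformContinuousOn f oB) :
    ∃ M : ℝ, 0 ≤ M ∧ ∀ x ∈ oB, ‖f x‖ ≤ M := by
  rw [Metric.uniformContinuousOn_iff] at hf
  obtain ⟨δ, hδ, h⟩ := hf 1 one_pos
  set K : ℕ := ⌈δ⁻¹⌉₊ + 1 with hK
  have hKpos : 0 < (K:ℝ) := by positivity
  have hKδ : 1/(K:ℝ) < δ := by
    rw [one_div, inv_lt_comm₀ hKpos hδ]
    calc δ⁻¹ ≤ (⌈δ⁻¹⌉₊ : ℝ) := Nat.le_ceil _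
    _ < K := by rw [hK]; push_cast; linarith
  refine ⟨‖f 0‖ + K, by positivity, fun x hx => ?_⟩
  rw [mem_oB_iff] at hx
  have hmem : ∀ m : ℕ, m ≤ K → (((m:ℝ)/(K:ℝ) : ℝ) : ℂ) • x ∈ oB := by
    intro m hm
    rw [mem_oB_iff, norm_smul]
    have h1 : ‖(((m:ℝ)/(K:ℝ) : ℝ) : ℂ)‖ ≤ 1 := by
      rw [Complex.norm_real, Real.norm_eq_abs, abs_of_nonneg (by positivity),
        div_le_one hKpos]
      exact_mod_cast hm
    nlinarith [norm_nonneg x, hx]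
  have key : ∀ j : ℕ, j ≤ K → ‖f ((((j:ℝ)/(K:ℝ) : ℝ) : ℂ) • x)‖ ≤ ‖f 0‖ + j := by
    intro j hj
    induction j with
    | zero => simp
    | succ i ih =>
      have hi : i ≤ K := Nat.le_of_succ_le hj
      have hd : dist (((((i:ℕ)+1:ℝ)/(K:ℝ) : ℝ) : ℂ) • x) ((((i:ℝ)/(K:ℝ) : ℝ) : ℂ) • x) < δ := by
        rw [dist_eq_norm, ← sub_smul, norm_smul]
        have : ((((i:ℕ)+1:ℝ)/(K:ℝ) : ℝ) : ℂ) - (((i:ℝ)/(K:ℝ) : ℝ) : ℂ)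
            = ((1/(K:ℝ) : ℝ) : ℂ) := by
          push_cast; ring
        rw [this, Complex.norm_real, Real.norm_eq_abs, abs_of_nonneg (by positivity)]
        calc 1/(K:ℝ) * ‖x‖ ≤ 1/(K:ℝ) * 1 := by
              apply mul_le_mul_of_nonneg_left hx.le (by positivity)
        _ < δ := by rw [mul_one]; exact hKδ
      have h2 := h _ (hmem (i+1) hj) _ (hmem i hi) (by exact_mod_cast hd)
      rw [dist_eq_norm] at h2
      rw [Nat.cast_add, Nat.cast_one] at h2
      have h3 : ‖f (((((i:ℕ)+1:ℝ)/(K:ℝ) : ℝ) : ℂ) • x)‖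
          ≤ ‖f ((((i:ℝ)/(K:ℝ) : ℝ) : ℂ) • x)‖ + 1 := by
        have := norm_sub_norm_le (f (((((i:ℕ)+1:ℝ)/(K:ℝ) : ℝ) : ℂ) • x))
          (f ((((i:ℝ)/(K:ℝ) : ℝ) : ℂ) • x))
        linarith
      have h4 := ih hi
      have h5 : (((i:ℕ)+1:ℕ):ℝ) = (i:ℝ)+1 := by push_cast; ring
      rw [h5]
      calc ‖f (((((i:ℝ)+1)/(K:ℝ) : ℝ) : ℂ) • x)‖ ≤ ‖f ((((i:ℝ)/(K:ℝ) : ℝ) : ℂ) • x)‖ + 1 := h3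
      _ ≤ ‖f 0‖ + ((i:ℝ)+1) := by linarith
  have hx' := key K le_rfl
  rw [div_self (ne_of_gt hKpos)] at hx'
  simpa using hx'

lemma uc_ucOn {α β : Type*} [UniformSpace α] [UniformSpace β] {f : α → β} {s : Set α}
    (h : UniformContinuous f) : UniformContinuousOn f s :=
  h.mono_left inf_le_left

lemma memAu_bounded {f : ℓ2 → ℂ} (hf : MemAu f) : ∃ M : ℝ, 0 ≤ M ∧ ∀ x ∈ oB, ‖f x‖ ≤ M :=
  bounded_of_uc hf.2

lemma memAu_const (c : ℂ) : MemAu (fun _ => c) :=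
  ⟨differentiableOn_const c, uc_ucOn uniformContinuous_const⟩

lemma memAu_one : MemAu (1 : ℓ2 → ℂ) := memAu_const 1

lemma memAu_add {f g : ℓ2 → ℂ} (hf : MemAu f) (hg : MemAu g) : MemAu (f + g) := by
  refine ⟨hf.1.add hg.1, ?_⟩
  have uf := hf.2; have ug := hg.2
  rw [Metric.uniformContinuousOn_iff] at uf ug ⊢
  intro ε hε
  obtain ⟨δ₁, h1, H1⟩ := uf (ε/2) (by linarith)
  obtain ⟨δ₂, h2, H2⟩ := ug (ε/2) (by linarith)
  refine ⟨min δ₁ δ₂, lt_min h1 h2, fun x hx y hy hd => ?_⟩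
  have := H1 x hx y hy (hd.trans_le (min_le_left _ _))
  have := H2 x hx y hy (hd.trans_le (min_le_right _ _))
  simp only [dist_eq_norm, Pi.add_apply] at *
  calc ‖f x + g x - (f y + g y)‖ = ‖(f x - f y) + (g x - g y)‖ := by ring_nf
  _ ≤ ‖f x - f y‖ + ‖g x - g y‖ := norm_add_le _ _
  _ < ε := by linarith

lemma memAu_smul (c : ℂ) {f : ℓ2 → ℂ} (hf : MemAu f) : MemAu (c • f) := by
  refine ⟨hf.1.const_smul c, ?_⟩
  have uf := hf.2
  rw [Metric.uniformContinuousOn_iff] at uf ⊢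
  intro ε hε
  obtain ⟨δ, h1, H1⟩ := uf (ε/(‖c‖+1)) (by positivity)
  refine ⟨δ, h1, fun x hx y hy hd => ?_⟩
  have := H1 x hx y hy hd
  simp only [dist_eq_norm, Pi.smul_apply, smul_eq_mul, ← mul_sub, norm_mul] at *
  calc ‖c‖ * ‖f x - f y‖ ≤ (‖c‖+1) * ‖f x - f y‖ := by
        apply mul_le_mul_of_nonneg_right (by linarith) (norm_nonneg _)
  _ < (‖c‖+1) * (ε/(‖c‖+1)) := by
        apply mul_lt_mul_of_pos_left this (by positivity)
  _ = ε := by field_simp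

lemma memAu_mul {f g : ℓ2 → ℂ} (hf : MemAu f) (hg : MemAu g) : MemAu (f * g) := by
  refine ⟨hf.1.mul hg.1, ?_⟩
  obtain ⟨M₁, hM₁, hfb⟩ := memAu_bounded hf
  obtain ⟨M₂, hM₂, hgb⟩ := memAu_bounded hg
  have uf := hf.2; have ug := hg.2
  rw [Metric.uniformContinuousOn_iff] at uf ug ⊢
  intro ε hε
  obtain ⟨δ₁, h1, H1⟩ := uf (ε/(2*(M₂+1))) (by positivity)
  obtain ⟨δ₂, h2, H2⟩ := ug (ε/(2*(M₁+1))) (by positivity)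
  refine ⟨min δ₁ δ₂, lt_min h1 h2, fun x hx y hy hd => ?_⟩
  have e1 := H1 x hx y hy (hd.trans_le (min_le_left _ _))
  have e2 := H2 x hx y hy (hd.trans_le (min_le_right _ _))
  simp only [dist_eq_norm, Pi.mul_apply] at *
  have key : f x * g x - f y * g y = f x * (g x - g y) + (f x - f y) * g y := by ring
  rw [key]
  calc ‖f x * (g x - g y) + (f x - f y) * g y‖
      ≤ ‖f x‖ * ‖g x - g y‖ + ‖f x - f y‖ * ‖g y‖ := by
        refine (norm_add_le _ _).trans ?_
        rw [norm_mul, norm_mul]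
  _ ≤ M₁ * (ε/(2*(M₁+1))) + (ε/(2*(M₂+1))) * M₂ := by
        have b1 := hfb x hx
        have b2 := hgb y hy
        have : ‖f x‖ * ‖g x - g y‖ ≤ M₁ * (ε/(2*(M₁+1))) :=
          mul_le_mul b1 e2.le (norm_nonneg _) hM₁
        have : ‖f x - f y‖ * ‖g y‖ ≤ (ε/(2*(M₂+1))) * M₂ :=
          mul_le_mul e1.le b2 (norm_nonneg _) (by positivity)
        linarith
  _ < ε := by
        have l1 : M₁ * (ε/(2*(M₁+1))) < ε/2 := by
          rw [mul_div_assoc'] ; rw [div_lt_div_iff₀ (by positivity) (by norm_num)]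
          nlinarith
        have l2 : (ε/(2*(M₂+1))) * M₂ < ε/2 := by
          rw [div_mul_eq_mul_div, mul_comm]
          rw [div_lt_div_iff₀ (by positivity) (by norm_num)]
          nlinarith
        linarith

lemma memAu_pow {f : ℓ2 → ℂ} (hf : MemAu f) : ∀ n : ℕ, MemAu (f ^ n)
  | 0 => by rw [pow_zero]; exact memAu_one
  | (n+1) => by rw [pow_succ]; exact memAu_mul (memAu_pow hf n) hf

lemma memAu_inner (w : ℓ2) : MemAu (fun x => ⟪w, x⟫) := by
  constructor
  · exact (innerSL ℂ w).differentiable.differentiableOn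
  · exact uc_ucOn (innerSL ℂ w).uniformContinuous

lemma coord_eq_inner (n : ℕ) : coord n = fun x : ℓ2 => ⟪lp.single 2 n (1:ℂ), x⟫ := by
  funext x
  rw [lp.inner_single_left]
  simp [coord, RCLike.inner_apply]

lemma memAu_coord (n : ℕ) : MemAu (coord n) := by
  rw [coord_eq_inner]; exact memAu_inner _

end MemAuLemmas

section PhiLemmas

local notation "⟪" x ", " y "⟫" => @inner ℂ _ _ x y

lemma oB_preconnected : IsPreconnected oB :=
  (convex_ball (0:ℓ2) 1).isPreconnected

lemma Phi_norm (Φ : MuInfHom) : ∃ C : ℝ, 0 < C ∧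
    ∀ h, MemAu h → ∀ x ∈ oB, ‖Φ.toFun h x‖ ≤ C * supNorm h := by
  obtain ⟨C, hC⟩ := Φ.cont
  refine ⟨max C 1, lt_of_lt_of_le one_pos (le_max_right _ _), fun h hh x hx => ?_⟩
  exact (hC h hh x hx).trans
    (mul_le_mul_of_nonneg_right (le_max_left _ _) (supNorm_nonneg h))

lemma Phi_one (Φ : MuInfHom) : ∀ x ∈ oB, Φ.toFun 1 x = 1 := by
  have h1 : MemAu (1 : ℓ2 → ℂ) := memAu_one
  set E := Φ.toFun 1 with hE
  have hval : ∀ x ∈ oB, E x = 0 ∨ E x = 1 := by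
    intro x hx
    have h := Φ.map_mul 1 1 h1 h1 x hx
    rw [mul_one] at h
    have h2 : E x * (E x - 1) = 0 := by rw [hE]; linear_combination -h
    rcases mul_eq_zero.mp h2 with h' | h'
    · exact Or.inl h'
    · exact Or.inr (sub_eq_zero.mp h')
  have hcont : ContinuousOn E oB := (Φ.maps_mem 1 h1).1.continuousOn
  -- some point where E = 1
  obtain ⟨f₀, hf₀, x₀, hx₀, hne⟩ := Φ.nonzero
  have hx₀1 : E x₀ = 1 := by
    have h := Φ.map_mul f₀ 1 hf₀ h1 x₀ hx₀
    rw [mul_one, ← hE] at h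
    rcases hval x₀ hx₀ with h' | h'
    · exfalso; apply hne; rw [h, h', mul_zero]
    · exact h'
  -- connectedness argument
  intro x hx
  by_contra hne1
  have hx0 : E x = 0 := by rcases hval x hx with h | h; exact h; exact absurd h hne1
  have himg : IsPreconnected (E '' oB) := oB_preconnected.image E hcont
  have h0 : (0:ℂ) ∈ E '' oB := ⟨x, hx, hx0⟩
  have h1' : (1:ℂ) ∈ E '' oB := ⟨x₀, hx₀, hx₀1⟩
  have hdisj : Disjoint (Metric.ball (0:ℂ) (1/2)) (Metric.ball (1:ℂ) (1/2)) := by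
    rw [Set.disjoint_iff]
    rintro z ⟨hz1, hz2⟩
    rw [Metric.mem_ball] at hz1 hz2
    have htri := dist_triangle (0:ℂ) z 1
    rw [dist_comm (0:ℂ) z] at htri
    have h01 : dist (0:ℂ) 1 = 1 := by simp
    simp only [Set.mem_empty_iff_false]
    linarith
  have hcover : E '' oB ⊆ Metric.ball (0:ℂ) (1/2) ∪ Metric.ball (1:ℂ) (1/2) := by
    rintro z ⟨xz, hxz, rfl⟩
    rcases hval xz hxz with h | h <;> rw [h]
    · left; norm_num [Metric.mem_ball]
    · right; simp
  have hsub := IsPreconnected.subset_left_of_subset_union Metric.isOpen_ball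
    Metric.isOpen_ball hdisj hcover ⟨0, h0, by norm_num [Metric.mem_ball]⟩ himg
  have := hsub h1'
  rw [Metric.mem_ball] at this
  simp at this
  norm_num at this

lemma Phi_pow (Φ : MuInfHom) {f : ℓ2 → ℂ} (hf : MemAu f) :
    ∀ n : ℕ, ∀ x ∈ oB, Φ.toFun (f^n) x = (Φ.toFun f x)^n := by
  intro n
  induction n with
  | zero => intro x hx; rw [pow_zero, pow_zero]; exact Phi_one Φ x hx
  | succ n ih =>
    intro x hx
    rw [pow_succ, pow_succ, ← ih x hx]
    exact Φ.map_mul _ _ (memAu_pow hf n) hf x hx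

end PhiLemmas

section PhiInner

local notation "⟪" x ", " y "⟫" => @inner ℂ _ _ x y

lemma supNorm_inner_le (d : ℓ2) : supNorm (fun x => ⟪d, x⟫) ≤ ‖d‖ := by
  apply supNorm_le
  intro x hx
  rw [mem_oB_iff] at hx
  calc ‖⟪d, x⟫‖ ≤ ‖d‖ * ‖x‖ := norm_inner_le_norm d x
  _ ≤ ‖d‖ * 1 := mul_le_mul_of_nonneg_left hx.le (norm_nonneg d)
  _ = ‖d‖ := mul_one _

lemma Phi_inner (g : ℓ2 → ℓ2) (Φ : MuInfHom) (hΦ : xiEq Φ g) {C : ℝ} (hC0 : 0 < C)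
    (hC : ∀ h, MemAu h → ∀ x ∈ oB, ‖Φ.toFun h x‖ ≤ C * supNorm h)
    (w : ℓ2) {y : ℓ2} (hy : y ∈ oB) :
    Φ.toFun (fun x => ⟪w, x⟫) y = ⟪w, g y⟫ := by
  classical
  set P : ℕ → ℓ2 := fun N => ∑ n ∈ Finset.range N, lp.single 2 n (w n) with hP
  have hPt : Filter.Tendsto P atTop (nhds w) :=
    (lp.hasSum_single (by norm_num) w).tendsto_sum_nat
  -- value on partial sums
  have hstep : ∀ N : ℕ, Φ.toFun (fun x => ⟪P N, x⟫) y = ⟪P N, g y⟫ := by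
    intro N
    induction N with
    | zero =>
      have hfn : (fun x : ℓ2 => ⟪P 0, x⟫) = (0:ℂ) • (1 : ℓ2 → ℂ) := by
        funext x
        simp [hP, Finset.sum_range_zero, inner_zero_left]
      rw [hfn, Φ.map_smul 0 1 memAu_one y hy]
      simp [hP, Finset.sum_range_zero, inner_zero_left]
    | succ N ih =>
      have hPsucc : P (N+1) = P N + lp.single 2 N (w N) := by
        rw [hP]; exact Finset.sum_range_succ _ N
      have hfn : (fun x : ℓ2 => ⟪P (N+1), x⟫)
          = (fun x : ℓ2 => ⟪P N, x⟫) + (starRingEnd ℂ (w N)) • coord N := by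
        funext x
        simp [hPsucc, inner_add_left, lp.inner_single_left, RCLike.inner_apply, coord]
        ring
      rw [hfn, Φ.map_add _ _ (memAu_inner (P N)) (memAu_smul _ (memAu_coord N)) y hy,
        Φ.map_smul _ _ (memAu_coord N) y hy, hΦ y hy N, ih, hPsucc]
      simp [inner_add_left, lp.inner_single_left, RCLike.inner_apply]
      ring
  -- decomposition for each N
  have hdec : ∀ N : ℕ, Φ.toFun (fun x => ⟪w, x⟫) y
      = ⟪P N, g y⟫ + Φ.toFun (fun x => ⟪w - P N, x⟫) y := by
    intro N
    have hfn : (fun x : ℓ2 => ⟪w, x⟫)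
        = (fun x : ℓ2 => ⟪P N, x⟫) + (fun x : ℓ2 => ⟪w - P N, x⟫) := by
      funext x
      simp [inner_sub_left, Pi.add_apply]
    rw [hfn, Φ.map_add _ _ (memAu_inner (P N)) (memAu_inner (w - P N)) y hy, hstep N]
  -- error bound
  have herr : Filter.Tendsto (fun N => Φ.toFun (fun x => ⟪w - P N, x⟫) y) atTop (nhds 0) := by
    apply squeeze_zero_norm (a := fun N => C * ‖w - P N‖)
    · intro N
      calc ‖Φ.toFun (fun x => ⟪w - P N, x⟫) y‖ ≤ C * supNorm (fun x => ⟪w - P N, x⟫) :=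
            hC _ (memAu_inner _) y hy
      _ ≤ C * ‖w - P N‖ :=
            mul_le_mul_of_nonneg_left (supNorm_inner_le _) hC0.le
    · have : Filter.Tendsto (fun N => ‖w - P N‖) atTop (nhds 0) := by
        have h1 : Filter.Tendsto (fun N => w - P N) atTop (nhds 0) := by
          have h2 := (tendsto_const_nhds (x := w) (f := (atTop : Filter ℕ))).sub hPt
          simpa using h2
        simpa using h1.norm
      simpa using this.const_mul C
  -- first term tendsto
  have hfirst : Filter.Tendsto (fun N => ⟪P N, g y⟫) atTop (nhds ⟪w, g y⟫) :=
    (hPt.inner tendsto_const_nhds)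
  have hsum : Filter.Tendsto (fun N => ⟪P N, g y⟫ + Φ.toFun (fun x => ⟪w - P N, x⟫) y)
      atTop (nhds (⟪w, g y⟫ + 0)) := hfirst.add herr
  rw [add_zero] at hsum
  have hconst : Filter.Tendsto (fun _ : ℕ => Φ.toFun (fun x => ⟪w, x⟫) y) atTop
      (nhds (⟪w, g y⟫)) := (Filter.tendsto_congr (fun N => hdec N)).2 hsum
  exact tendsto_nhds_unique tendsto_const_nhds hconst

end PhiInner

section Peak

local notation "⟪" x ", " y "⟫" => @inner ℂ _ _ x y

lemma peak_estimate (g : ℓ2 → ℓ2) (Φ : MuInfHom) (hΦ : xiEq Φ g)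
    {C : ℝ} (hC0 : 0 < C) (hC : ∀ h, MemAu h → ∀ x ∈ oB, ‖Φ.toFun h x‖ ≤ C * supNorm h)
    {f fext : ℓ2 → ℂ} (hf : MemAu f) (hfe : IsExt f fext)
    {z : ℓ2} (hz : ‖z‖ = 1) {ε : ℝ} (hε : 0 < ε) :
    ∃ θ : ℝ, 0 ≤ θ ∧ θ < 1 ∧ ∃ M : ℝ, 0 ≤ M ∧ ∀ n : ℕ, ∀ y ∈ oB,
      ‖Φ.toFun f y - fext z‖ * ‖(1 + ⟪z, g y⟫)/2‖^n ≤ C * max ε (M * θ^n) := by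
  have hzc : z ∈ cB := mem_cB_iff.mpr hz.le
  -- continuity of fext at z within cB
  have hcw : ContinuousWithinAt fext cB z := hfe.1 z hzc
  rw [Metric.continuousWithinAt_iff] at hcw
  obtain ⟨δ₀, hδ₀, hδ⟩ := hcw ε hε
  set δ : ℝ := min δ₀ 1 with hδdef
  have hδpos : 0 < δ := lt_min hδ₀ one_pos
  have hδ1 : δ ≤ 1 := min_le_right _ _
  set θ : ℝ := 1 - δ^2/8 with hθdef
  have hθ0 : 0 ≤ θ := by rw [hθdef]; nlinarith
  have hθlt : θ < 1 := by rw [hθdef]; nlinarith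
  obtain ⟨M₀, hM₀, hfb⟩ := memAu_bounded hf
  set c : ℂ := fext z with hc
  set M : ℝ := M₀ + ‖c‖ with hM
  refine ⟨θ, hθ0, hθlt, M, by positivity, fun n y hy => ?_⟩
  -- the peak function
  set L : ℓ2 → ℂ := fun x => ⟪z, x⟫ with hL
  set u : ℓ2 → ℂ := (2⁻¹ : ℂ) • ((1 : ℓ2 → ℂ) + L) with hu
  have hLau : MemAu L := memAu_inner z
  have huau : MemAu u := memAu_smul _ (memAu_add memAu_one hLau)
  have huval : ∀ x : ℓ2, u x = (1 + ⟪z, x⟫)/2 := by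
    intro x
    simp only [hu, Pi.smul_apply, Pi.add_apply, Pi.one_apply, smul_eq_mul, hL]
    ring
  have hinner_le : ∀ x : ℓ2, x ∈ oB → ‖⟪z, x⟫‖ ≤ 1 := by
    intro x hx
    calc ‖⟪z, x⟫‖ ≤ ‖z‖ * ‖x‖ := norm_inner_le_norm z x
    _ ≤ 1 * 1 := by
        apply mul_le_mul hz.le (mem_oB_iff.mp hx).le (norm_nonneg x) zero_le_one
    _ = 1 := one_mul 1
  have hu1 : ∀ x ∈ oB, ‖u x‖ ≤ 1 := by
    intro x hx
    rw [huval, norm_div]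
    have h1 : ‖(1 : ℂ) + ⟪z, x⟫‖ ≤ 1 + ‖⟪z, x⟫‖ := by
      simpa using norm_add_le (1:ℂ) ⟪z, x⟫
    have h2 := hinner_le x hx
    have h3 : ‖(2:ℂ)‖ = 2 := by norm_num
    rw [h3]
    linarith
  have hufar : ∀ x ∈ oB, δ ≤ ‖x - z‖ → ‖u x‖ ≤ θ := by
    intro x hx hfar
    have hres : RCLike.re ⟪z, x⟫ ≤ 1 - δ^2/2 := by
      have h1 : ‖x - z‖^2 = ‖x‖^2 - 2 * RCLike.re ⟪x, z⟫ + ‖z‖^2 := norm_sub_sq x z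
      have h2 : RCLike.re (⟪x, z⟫ : ℂ) = RCLike.re (⟪z, x⟫ : ℂ) := inner_re_symm x z
      have h3 : ‖x‖ ≤ 1 := (mem_oB_iff.mp hx).le
      have h4 : δ^2 ≤ ‖x - z‖^2 := by
        apply pow_le_pow_left₀ hδpos.le hfar
      rw [h2, hz] at h1
      nlinarith [norm_nonneg x]
    have hsq : ‖u x‖^2 ≤ θ^2 := by
      have h5 : ‖(1:ℂ) + ⟪z, x⟫‖^2
          = ‖(1:ℂ)‖^2 + 2 * RCLike.re ((starRingEnd ℂ 1) * ⟪z, x⟫) + ‖⟪z, x⟫‖^2 := by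
        have := norm_add_sq (𝕜 := ℂ) (1:ℂ) ⟪z, x⟫
        simpa [RCLike.inner_apply] using this
      have h6 : ‖⟪z, x⟫‖ ≤ 1 := hinner_le x hx
      rw [huval, norm_div]
      have h3 : ‖(2:ℂ)‖ = 2 := by norm_num
      rw [h3, div_pow]
      simp only [map_one, one_mul] at h5
      have h7 : ‖(1:ℂ)‖ = 1 := by norm_num
      rw [h7] at h5
      have h8 : ‖(1:ℂ) + ⟪z, x⟫‖^2 ≤ 4 - δ^2 := by
        rw [h5]; nlinarith [norm_nonneg (⟪z, x⟫ : ℂ)]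
      rw [hθdef]
      nlinarith [norm_nonneg ((1:ℂ) + ⟪z, x⟫)]
    exact (pow_le_pow_iff_left₀ (norm_nonneg _) hθ0 two_ne_zero).mp hsq
  -- f₀
  set f₀ : ℓ2 → ℂ := f + (-c) • (1 : ℓ2 → ℂ) with hf₀
  have hf₀au : MemAu f₀ := memAu_add hf (memAu_smul _ memAu_one)
  have hf₀val : ∀ x : ℓ2, f₀ x = f x - c := by
    intro x
    simp only [hf₀, Pi.add_apply, Pi.smul_apply, Pi.one_apply, smul_eq_mul]
    ring
  -- sup bound
  have hsup : supNorm (f₀ * u^n) ≤ max ε (M * θ^n) := by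
    apply supNorm_le
    intro x hx
    have hxval : ‖(f₀ * u^n) x‖ = ‖f₀ x‖ * ‖u x‖^n := by
      simp [Pi.mul_apply, Pi.pow_apply, norm_mul, norm_pow]
    rw [hxval]
    rcases lt_or_ge ‖x - z‖ δ with hnear | hfar
    · have h1 : ‖f₀ x‖ ≤ ε := by
        have hd : dist x z < δ₀ := by
          rw [dist_eq_norm]; exact hnear.trans_le (min_le_left _ _)
        have := hδ (oB_subset_cB hx) hd
        rw [dist_eq_norm] at this
        rw [hf₀val, ← hfe.2 hx]
        exact this.le
      have h2 : ‖u x‖^n ≤ 1 := pow_le_one₀ (norm_nonneg _) (hu1 x hx)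
      calc ‖f₀ x‖ * ‖u x‖^n ≤ ε * 1 :=
            mul_le_mul h1 h2 (by positivity) hε.le
      _ = ε := mul_one ε
      _ ≤ max ε (M * θ^n) := le_max_left _ _
    · have h1 : ‖f₀ x‖ ≤ M := by
        rw [hf₀val, hM]
        calc ‖f x - c‖ ≤ ‖f x‖ + ‖c‖ := norm_sub_le _ _
        _ ≤ M₀ + ‖c‖ := by linarith [hfb x hx]
      have h2 : ‖u x‖^n ≤ θ^n := pow_le_pow_left₀ (norm_nonneg _) (hufar x hx hfar) n
      calc ‖f₀ x‖ * ‖u x‖^n ≤ M * θ^n :=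
            mul_le_mul h1 h2 (by positivity) (by positivity)
      _ ≤ max ε (M * θ^n) := le_max_right _ _
  -- value identity
  have hval : Φ.toFun (f₀ * u^n) y = (Φ.toFun f y - c) * ((1 + ⟪z, g y⟫)/2)^n := by
    rw [Φ.map_mul _ _ hf₀au (memAu_pow huau n) y hy]
    have h1 : Φ.toFun f₀ y = Φ.toFun f y - c := by
      rw [hf₀, Φ.map_add _ _ hf (memAu_smul _ memAu_one) y hy,
        Φ.map_smul _ _ memAu_one y hy, Phi_one Φ y hy]
      ring
    have h2 : Φ.toFun u y = (1 + ⟪z, g y⟫)/2 := by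
      rw [hu, Φ.map_smul _ _ (memAu_add memAu_one hLau) y hy,
        Φ.map_add _ _ memAu_one hLau y hy, Phi_one Φ y hy, hL,
        Phi_inner g Φ hΦ hC0 hC z hy]
      ring
    rw [h1, Phi_pow Φ huau n y hy, h2]
  -- conclude
  have hbound := hC _ (memAu_mul hf₀au (memAu_pow huau n)) y hy
  rw [hval] at hbound
  rw [norm_mul, norm_pow] at hbound
  exact hbound.trans (mul_le_mul_of_nonneg_left hsup hC0.le)

end Peak

section CaseB

local notation "⟪" x ", " y "⟫" => @inner ℂ _ _ x y

lemma exists_small_pow {M θ ε : ℝ} (hθ0 : 0 ≤ θ) (hθ1 : θ < 1) (hε : 0 < ε) :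
    ∃ n : ℕ, M * θ^n < ε := by
  have h := tendsto_pow_atTop_nhds_zero_of_lt_one hθ0 hθ1
  have h2 := h.const_mul M
  rw [mul_zero] at h2
  have h3 := (h2.eventually (eventually_lt_nhds hε)).exists
  exact h3

lemma eq_of_peak_bound (g : ℓ2 → ℓ2) (Φ : MuInfHom) (hΦ : xiEq Φ g)
    {C : ℝ} (hC0 : 0 < C) (hC : ∀ h, MemAu h → ∀ x ∈ oB, ‖Φ.toFun h x‖ ≤ C * supNorm h)
    {f fext : ℓ2 → ℂ} (hf : MemAu f) (hfe : IsExt f fext)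
    {z : ℓ2} (hz : ‖z‖ = 1) {x : ℓ2} (hx : x ∈ oB) (hgx : g x = z) :
    Φ.toFun f x = fext z := by
  rw [← sub_eq_zero]
  by_contra hne
  have ha : 0 < ‖Φ.toFun f x - fext z‖ := norm_pos_iff.mpr hne
  set a := ‖Φ.toFun f x - fext z‖ with hadef
  have hε : 0 < a/(2*C) := by positivity
  obtain ⟨θ, hθ0, hθ1, M, hM0, hest⟩ :=
    peak_estimate g Φ hΦ hC0 hC hf hfe hz hε
  obtain ⟨n, hn⟩ := exists_small_pow (M := M) hθ0 hθ1 hε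
  have h1 := hest n x hx
  have hm : ((1 : ℂ) + ⟪z, g x⟫)/2 = 1 := by
    rw [hgx, inner_self_eq_norm_sq_to_K, hz]
    norm_num
  rw [hm] at h1
  simp only [norm_one, one_pow, mul_one] at h1
  have h2 : max (a/(2*C)) (M * θ^n) ≤ a/(2*C) := max_le le_rfl hn.le
  have h3 : a ≤ C * (a/(2*C)) := h1.trans (mul_le_mul_of_nonneg_left h2 hC0.le)
  rw [mul_div_assoc', le_div_iff₀ (by positivity)] at h3
  nlinarith

end CaseB

section CaseSplit

local notation "⟪" x ", " y "⟫" => @inner ℂ _ _ x y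

lemma oB_isOpen : IsOpen oB := Metric.isOpen_ball

lemma g_constant {g : ℓ2 → ℓ2} (hg : MemHinfV g) (hgb : ∀ x ∈ oB, ‖g x‖ ≤ 1)
    {x₁ : ℓ2} (hx₁ : x₁ ∈ oB) (h1 : ‖g x₁‖ = 1) : ∀ x ∈ oB, g x = g x₁ := by
  set ψ : ℓ2 → ℂ := fun x => ⟪g x₁, g x⟫ with hψ
  have hψd : DifferentiableOn ℂ ψ oB :=
    (innerSL ℂ (g x₁)).differentiable.comp_differentiableOn hg.1
  have hψ1 : ψ x₁ = 1 := by
    rw [hψ]; simp only []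
    rw [inner_self_eq_norm_sq_to_K, h1]; norm_num
  have hmax : IsMaxOn (norm ∘ ψ) oB x₁ := by
    intro x hx
    simp only [Function.comp_apply, hψ1, hψ, norm_one]
    calc ‖⟪g x₁, g x⟫‖ ≤ ‖g x₁‖ * ‖g x‖ := norm_inner_le_norm _ _
    _ ≤ 1 * 1 := mul_le_mul h1.le (hgb x hx) (norm_nonneg _) zero_le_one
    _ = ‖ψ x₁‖ := by rw [hψ1]; norm_num
  have heq := Complex.eqOn_of_isPreconnected_of_isMaxOn_norm oB_preconnected oB_isOpen
    hψd hx₁ hmax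
  intro x hx
  have hψx : ψ x = 1 := by
    have := heq hx
    rw [Function.const_apply, hψ1] at this
    exact this
  have hnorm : ‖g x - g x₁‖^2 ≤ 0 := by
    have hns := norm_sub_sq (𝕜 := ℂ) (g x) (g x₁)
    have hre : RCLike.re (⟪g x, g x₁⟫ : ℂ) = 1 := by
      have : (⟪g x, g x₁⟫ : ℂ) = starRingEnd ℂ (ψ x) := by
        rw [hψ]; simp only []; rw [← inner_conj_symm]
      rw [this, hψx]
      norm_num
    rw [hns, hre, h1]
    nlinarith [hgb x hx, norm_nonneg (g x)]
  have := pow_eq_zero_iff (n := 2) (by norm_num) |>.mp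
    (le_antisymm hnorm (by positivity))
  rwa [norm_sub_eq_zero_iff] at this

lemma caseA (g : ℓ2 → ℓ2) (hg : MemHinfV g) (hgb : ∀ x ∈ oB, ‖g x‖ ≤ 1)
    (hgA : ∀ x ∈ oB, g x ∈ oB)
    (gext : ℓ2 → ℓ2) (hgc : ContinuousOn gext cB) (hgeq : Set.EqOn gext g oB)
    (hsph : ∀ x ∈ sph, gext x ∈ sph)
    (Φ : MuInfHom) (hΦ : xiEq Φ g)
    {C : ℝ} (hC0 : 0 < C) (hC : ∀ h, MemAu h → ∀ x ∈ oB, ‖Φ.toFun h x‖ ≤ C * supNorm h)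
    {f fext : ℓ2 → ℂ} (hf : MemAu f) (hfe : IsExt f fext)
    {e : ℓ2} (he : ‖e‖ = 1) {x₀ : ℓ2} (hx₀ : x₀ ∈ oB)
    (hx0e : ((‖x₀‖ : ℝ) : ℂ) • e = x₀) :
    Φ.toFun f x₀ = fext (g x₀) := by
  set φe : ℂ → ℓ2 := fun l => l • e with hφe
  have hφdiff : Differentiable ℂ φe := by
    have : φe = ⇑((1 : ℂ →L[ℂ] ℂ).smulRight e) := by
      funext l; simp [hφe]
    rw [this]
    exact ((1 : ℂ →L[ℂ] ℂ).smulRight e).differentiable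
  have hφnorm : ∀ l : ℂ, ‖φe l‖ = ‖l‖ := by
    intro l; rw [hφe]; simp [norm_smul, he]
  have hmaps : Set.MapsTo φe (Metric.ball (0:ℂ) 1) oB := by
    intro l hl
    rw [mem_oB_iff, hφnorm]
    exact mem_ball_zero_iff.mp hl
  set W : ℂ → ℂ := fun l => Φ.toFun f (φe l) - fext (g (φe l)) with hW
  -- differentiability of W on the unit disc
  have hWdiff : DifferentiableOn ℂ W (Metric.ball (0:ℂ) 1) := by
    have part1 : DifferentiableOn ℂ (fun l => Φ.toFun f (φe l)) (Metric.ball (0:ℂ) 1) :=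
      (Φ.maps_mem f hf).1.comp hφdiff.differentiableOn hmaps
    have part2 : DifferentiableOn ℂ (fun l => fext (g (φe l))) (Metric.ball (0:ℂ) 1) := by
      have hcomp : DifferentiableOn ℂ (fun l => f (g (φe l))) (Metric.ball (0:ℂ) 1) := by
        have hgφ : DifferentiableOn ℂ (fun l => g (φe l)) (Metric.ball (0:ℂ) 1) :=
          hg.1.comp hφdiff.differentiableOn hmaps
        exact hf.1.comp hgφ (fun l hl => hgA _ (hmaps hl))
      exact hcomp.congr (fun l hl => hfe.2 (hgA _ (hmaps hl)))
    exact part1.sub part2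
  -- boundary limits
  have hbdy : ∀ ζ : ℂ, ‖ζ‖ = 1 → Filter.Tendsto W (nhdsWithin ζ (Metric.ball (0:ℂ) 1))
      (nhds 0) := by
    intro ζ hζ
    have hζe : ‖ζ • e‖ = 1 := by rw [norm_smul, he, hζ]; norm_num
    have hζcB : ζ • e ∈ cB := mem_cB_iff.mpr hζe.le
    set z : ℓ2 := gext (ζ • e) with hz
    have hzs : ‖z‖ = 1 := mem_sph_iff.mp (hsph _ (mem_sph_iff.mpr hζe))
    -- tendsto of λ ↦ λ•e within cB
    have t0 : Filter.Tendsto φe (nhdsWithin ζ (Metric.ball (0:ℂ) 1)) (nhds (ζ • e)) := by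
      have : Filter.Tendsto φe (nhds ζ) (nhds (ζ • e)) := (hφdiff.continuous.tendsto ζ)
      exact this.mono_left nhdsWithin_le_nhds
    have t0' : Filter.Tendsto φe (nhdsWithin ζ (Metric.ball (0:ℂ) 1))
        (nhdsWithin (ζ • e) cB) := by
      apply tendsto_nhdsWithin_of_tendsto_nhds_of_eventually_within _ t0
      exact eventually_mem_nhdsWithin.mono (fun l hl => oB_subset_cB (hmaps hl))
    have t1 : Filter.Tendsto (fun l => g (φe l)) (nhdsWithin ζ (Metric.ball (0:ℂ) 1))
        (nhds z) := by
      have hgcw : Filter.Tendsto gext (nhdsWithin (ζ • e) cB) (nhds z) :=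
        hgc.continuousWithinAt hζcB
      have := hgcw.comp t0'
      apply this.congr'
      exact eventually_mem_nhdsWithin.mono
        (fun l hl => (hgeq (hmaps hl)))
    -- (i) the fext∘g part
    have t2 : Filter.Tendsto (fun l => fext (g (φe l))) (nhdsWithin ζ (Metric.ball (0:ℂ) 1))
        (nhds (fext z)) := by
      have hfcw : Filter.Tendsto fext (nhdsWithin z cB) (nhds (fext z)) :=
        hfe.1.continuousWithinAt (mem_cB_iff.mpr hzs.le)
      have t1' : Filter.Tendsto (fun l => g (φe l)) (nhdsWithin ζ (Metric.ball (0:ℂ) 1))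
          (nhdsWithin z cB) := by
        apply tendsto_nhdsWithin_of_tendsto_nhds_of_eventually_within _ t1
        exact eventually_mem_nhdsWithin.mono
          (fun l hl => mem_cB_iff.mpr (hgb _ (hmaps hl)))
      exact hfcw.comp t1'
    -- (ii) the Φ part via the peak estimate
    have t3 : Filter.Tendsto (fun l => Φ.toFun f (φe l)) (nhdsWithin ζ (Metric.ball (0:ℂ) 1))
        (nhds (fext z)) := by
      rw [Metric.tendsto_nhds]
      intro ε hε
      have hε' : 0 < ε/(4*C) := by positivity
      obtain ⟨θ, hθ0, hθ1, M, hM0, hest⟩ :=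
        peak_estimate g Φ hΦ hC0 hC hf hfe hzs hε'
      obtain ⟨n, hn⟩ := exists_small_pow (M := M) hθ0 hθ1 hε'
      -- the multiplier tends to 1
      have tm : Filter.Tendsto (fun l => ‖((1:ℂ) + ⟪z, g (φe l)⟫)/2‖^n)
          (nhdsWithin ζ (Metric.ball (0:ℂ) 1)) (nhds 1) := by
        have hinner : Filter.Tendsto (fun l => (⟪z, g (φe l)⟫ : ℂ))
            (nhdsWithin ζ (Metric.ball (0:ℂ) 1)) (nhds (⟪z, z⟫ : ℂ)) := by
          have hcont : Continuous (fun w : ℓ2 => (⟪z, w⟫ : ℂ)) := (innerSL ℂ z).continuous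
          exact (hcont.tendsto z).comp t1
        have hzz : (⟪z, z⟫ : ℂ) = 1 := by
          rw [inner_self_eq_norm_sq_to_K, hzs]; norm_num
        rw [hzz] at hinner
        have h2 : Filter.Tendsto (fun l => ((1:ℂ) + ⟪z, g (φe l)⟫)/2)
            (nhdsWithin ζ (Metric.ball (0:ℂ) 1)) (nhds 1) := by
          have := (tendsto_const_nhds (x := (1:ℂ)).add hinner).div_const (2:ℂ)
          norm_num at this
          exact this
        have h3 := (h2.norm).pow n
        rw [norm_one, one_pow] at h3
        exact h3
      have hev : ∀ᶠ l in nhdsWithin ζ (Metric.ball (0:ℂ) 1),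
          (1/2 : ℝ) ≤ ‖((1:ℂ) + ⟪z, g (φe l)⟫)/2‖^n :=
        tm.eventually (eventually_ge_nhds (by norm_num))
      filter_upwards [hev, eventually_mem_nhdsWithin] with l hl hlmem
      rw [dist_eq_norm]
      have hb := hest n (φe l) (hmaps hlmem)
      have hmax : max (ε/(4*C)) (M * θ^n) ≤ ε/(4*C) := max_le le_rfl hn.le
      have hb2 : ‖Φ.toFun f (φe l) - fext z‖ * ‖((1:ℂ) + ⟪z, g (φe l)⟫)/2‖^n
          ≤ C * (ε/(4*C)) := hb.trans (mul_le_mul_of_nonneg_left hmax hC0.le)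
      have hCε : C * (ε/(4*C)) = ε/4 := by field_simp
      rw [hCε] at hb2
      have hpos : (0:ℝ) < 1/2 := by norm_num
      nlinarith [norm_nonneg (Φ.toFun f (φe l) - fext z), hl,
        mul_le_mul_of_nonneg_left hl (norm_nonneg (Φ.toFun f (φe l) - fext z))]
    have := t3.sub t2
    rw [sub_self] at this
    exact this
  -- piecewise extension and maximum modulus
  set V : ℂ → ℂ := fun l => if ‖l‖ < 1 then W l else 0 with hV
  have hVd : DifferentiableOn ℂ V (Metric.ball (0:ℂ) 1) :=
    hWdiff.congr (fun l hl => if_pos (mem_ball_zero_iff.mp hl))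
  have hVc : ContinuousOn V (Metric.closedBall (0:ℂ) 1) := by
    intro l hl
    rcases lt_or_eq_of_le (mem_closedBall_zero_iff.mp hl) with hlt | heq1
    · have hball : l ∈ Metric.ball (0:ℂ) 1 := mem_ball_zero_iff.mpr hlt
      have hWc : ContinuousAt W l :=
        (hWdiff.differentiableAt (Metric.isOpen_ball.mem_nhds hball)).continuousAt
      have heqev : W =ᶠ[nhds l] V := by
        filter_upwards [Metric.isOpen_ball.mem_nhds hball] with w hw
        rw [hV]; simp only []
        rw [if_pos (mem_ball_zero_iff.mp hw)]
      exact (hWc.congr heqev).continuousWithinAt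
    · have hV0 : V l = 0 := by
        rw [hV]; simp only []
        rw [if_neg (by rw [heq1]; exact lt_irrefl _)]
      rw [ContinuousWithinAt, hV0]
      have hsplit : Metric.closedBall (0:ℂ) 1
          = Metric.ball (0:ℂ) 1 ∪ Metric.sphere (0:ℂ) 1 := ball_union_sphere.symm
      rw [hsplit, nhdsWithin_union, Filter.tendsto_sup]
      constructor
      · apply (hbdy l heq1).congr'
        filter_upwards [eventually_mem_nhdsWithin] with w hw
        rw [hV]; simp only []
        rw [if_pos (mem_ball_zero_iff.mp hw)]
      · apply Filter.Tendsto.congr' _ tendsto_const_nhds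
        filter_upwards [eventually_mem_nhdsWithin] with w hw
        rw [hV]; simp only []
        rw [if_neg (by rw [mem_sphere_zero_iff_norm.mp hw]; exact lt_irrefl _)]
  have hdcl : DiffContOnCl ℂ V (Metric.ball (0:ℂ) 1) :=
    ⟨hVd, by rwa [closure_ball (0:ℂ) one_ne_zero]⟩
  have hfront : ∀ w ∈ frontier (Metric.ball (0:ℂ) 1), ‖V w‖ ≤ 0 := by
    intro w hw
    rw [frontier_ball (0:ℂ) one_ne_zero] at hw
    have : V w = 0 := by
      rw [hV]; simp only []
      rw [if_neg (by rw [mem_sphere_zero_iff_norm.mp hw]; exact lt_irrefl _)]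
    rw [this, norm_zero]
  have hmem : ((‖x₀‖ : ℝ) : ℂ) ∈ Metric.ball (0:ℂ) 1 := by
    rw [mem_ball_zero_iff, Complex.norm_real, Real.norm_eq_abs, abs_of_nonneg (norm_nonneg _)]
    exact mem_oB_iff.mp hx₀
  have hfin := Complex.norm_le_of_forall_mem_frontier_norm_le Metric.isBounded_ball
    hdcl hfront (subset_closure hmem)
  have hV0 : V ((‖x₀‖ : ℝ) : ℂ) = 0 := norm_le_zero_iff.mp hfin
  rw [hV] at hV0
  simp only [] at hV0
  rw [if_pos (mem_ball_zero_iff.mp hmem)] at hV0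
  rw [hW] at hV0
  simp only [hφe] at hV0
  rw [hx0e] at hV0
  exact sub_eq_zero.mp hV0

end CaseSplit

lemma exists_dir (x : ℓ2) (hx : x ∈ oB) : ∃ e : ℓ2, ‖e‖ = 1 ∧ ((‖x‖ : ℝ) : ℂ) • e = x := by
  by_cases h : x = 0
  · refine ⟨lp.single 2 (0:ℕ) (1:ℂ), ?_, ?_⟩
    · have hns := lp.norm_single (p := 2) (E := fun _ : ℕ => ℂ) (by norm_num)
        0 (1:ℂ)
      rw [hns]
      norm_num
    · subst h
      simp
  · refine ⟨((‖x‖⁻¹ : ℝ) : ℂ) • x, ?_, ?_⟩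
    · rw [norm_smul, Complex.norm_real, Real.norm_eq_abs,
        abs_of_nonneg (by positivity)]
      field_simp
    · rw [smul_smul, ← Complex.ofReal_mul, mul_inv_cancel₀ (norm_ne_zero_iff.mpr h)]
      simp

/-- if `g` extends continuously to the closed ball mapping the sphere into the
sphere, then the fiber `𝓕(g)` consists only of `C_g`. -/
theorem stmt4 (g : ℓ2 → ℓ2) (hg : MemHinfV g) (hg1 : supNormV g ≤ 1)
    (gext : ℓ2 → ℓ2) (hgc : ContinuousOn gext cB) (hgeq : Set.EqOn gext g oB)
    (hsph : ∀ x ∈ sph, gext x ∈ sph)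
    (Φ : MuInfHom) (hΦ : xiEq Φ g) :
    ∀ f fext, MemAu f → IsExt f fext → ∀ x ∈ oB, Φ.toFun f x = fext (g x) := by
  intro f fext hf hfe x hx
  obtain ⟨C, hC0, hC⟩ := Phi_norm Φ
  obtain ⟨C₂, hC₂⟩ := hg.2
  have hgb : ∀ y ∈ oB, ‖g y‖ ≤ 1 := fun y hy => (le_supNormV hC₂ hy).trans hg1
  by_cases hA : ∀ y ∈ oB, g y ∈ oB
  · obtain ⟨e, he, hxe⟩ := exists_dir x hx
    exact caseA g hg hgb hA gext hgc hgeq hsph Φ hΦ hC0 hC hf hfe he hx hxe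
  · push_neg at hA
    obtain ⟨y, hy, hgy⟩ := hA
    have h1 : ‖g y‖ = 1 := le_antisymm (hgb y hy) (not_lt.mp (fun hlt => hgy (mem_oB_iff.mpr hlt)))
    have hconst := g_constant hg hgb hy h1
    have hgx : g x = g y := hconst x hx
    rw [show fext (g x) = fext (g y) from by rw [hgx]]
    exact eq_of_peak_bound g Φ hΦ hC0 hC hf hfe h1 hx hgx
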